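/- In the ReLU feedforward family with widths n_0,...,n_K and weight bounds s_1,...,s_K, for any layer index i with 1 ≤ i < K and any a_j ∈ [0, s_j] for j > i, there exists a choice of weights W_{i+1},...,W_K with ‖W_j‖ ≤ s_j such that for all W_i and all x, the network output satisfies h_K = (∏_{j=i+1}^K a_j)·ReLU((W_i h_{i-1})^{(n_{i+1},...,n_K)}); consequently the Lipschitz constant of h_K with respect to the pre-activation y_i = W_i h_{i-1} equals exactly ∏_{j=i+1}^K a_j. -/

import Mathlib

/-- Induced infinity norm of a matrix: maximum absolute row sum. -/
noncomputable def infNorm {n m : ℕ} (A : Matrix (Fin n) (Fin m) ℝ) : ℝ :=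
  ⨆ i, ∑ j, |A i j|

/-- Coordinatewise ReLU. -/
def relu {k : ℕ} (v : Fin k → ℝ) : Fin k → ℝ := fun i => max (v i) 0

/-- `padChain n a b v` = iterated truncation/zero-padding `v^{(n (a+1), …, n b)}` of
`v : Fin (n a) → ℝ`: coordinate `t` survives iff `t < n j` for all `a ≤ j < b`. -/
def padChain (n : ℕ → ℕ) (a b : ℕ) (v : Fin (n a) → ℝ) : Fin (n b) → ℝ :=
  fun t => if h : (t : ℕ) < n a ∧ ∀ j, a ≤ j → j < b → (t : ℕ) < n j then v ⟨t, h.1⟩ else 0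

/-!
Choose every tail layer to be `a_j` times the rectangular identity `I_j`. Since `a_j ≥ 0`,
`ReLU (a_j • I_j v) = a_j • I_j (ReLU v)` and `ReLU` is idempotent, so by induction the tail of
the network is `y ↦ (∏ a_j) • ReLU (y^{(n_{i+2},…,n_K)})`. Truncation/padding and `ReLU` are
1-Lipschitz in the sup norm, giving the upper bound; the all-ones vector keeps its first
coordinate through every layer and is sent at distance exactly `∏ a_j` from the image of `0`,
giving the lower bound.
-/

open Finset

/-- The paper's `I_j`, here of size `m × k`. -/
def rectId (m k : ℕ) : Matrix (Fin m) (Fin k) ℝ := fun t u => if (t : ℕ) = u then 1 else 0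

/-- `v ↦ v^{(m)}` in the paper's notation. -/
def truncPad {k : ℕ} (m : ℕ) (v : Fin k → ℝ) : Fin m → ℝ :=
  fun t => if h : (t : ℕ) < k then v ⟨t, h⟩ else 0

theorem rectId_mulVec {m k : ℕ} (v : Fin k → ℝ) : (rectId m k).mulVec v = truncPad m v := by
  funext t
  by_cases ht : (t : ℕ) < k
  · have : ∀ u : Fin k, (t : ℕ) = u ↔ u = ⟨t, ht⟩ := fun u => by rw [Fin.ext_iff, eq_comm]
    simp [Matrix.mulVec, dotProduct, rectId, truncPad, ht, this]
  · have : ∀ u : Fin k, (t : ℕ) ≠ u := fun u h => ht (h ▸ u.isLt)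
    simp [Matrix.mulVec, dotProduct, rectId, truncPad, ht, this]

theorem infNorm_smul_rectId_le {m k : ℕ} {c : ℝ} (hc : 0 ≤ c) :
    infNorm (c • rectId m k) ≤ c := by
  refine Real.iSup_le (fun t => ?_) hc
  have hrow : ∀ u : Fin k, |(c • rectId m k) t u| = c * (rectId m k) t u := fun u => by
    simp only [Matrix.smul_apply, smul_eq_mul, rectId]
    split_ifs <;> simp [abs_of_nonneg hc]
  -- a row sum of `I` is an entry of `I *ᵥ 1`, hence `0` or `1`
  simp_rw [hrow, ← mul_sum, ← dotProduct_one, ← Matrix.mulVec.eq_1, rectId_mulVec]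
  refine mul_le_of_le_one_right hc ?_
  unfold truncPad
  split_ifs <;> simp

theorem truncPad_smul {k : ℕ} (m : ℕ) (c : ℝ) (v : Fin k → ℝ) :
    truncPad m (c • v) = c • truncPad m v := by
  funext t
  simp only [truncPad, Pi.smul_apply, smul_eq_mul]
  split_ifs <;> simp

theorem truncPad_relu {k : ℕ} (m : ℕ) (v : Fin k → ℝ) :
    truncPad m (relu v) = relu (truncPad m v) := by
  funext t
  simp only [truncPad, relu]
  split_ifs <;> simp

theorem relu_smul_of_nonneg {k : ℕ} {c : ℝ} (hc : 0 ≤ c) (v : Fin k → ℝ) :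
    relu (c • v) = c • relu v := by
  funext t
  simp [relu, mul_max_of_nonneg _ _ hc]

theorem relu_relu {k : ℕ} (v : Fin k → ℝ) : relu (relu v) = relu v := by
  funext t
  simp [relu]

theorem norm_relu_sub_relu_le {k : ℕ} (v w : Fin k → ℝ) : ‖relu v - relu w‖ ≤ ‖v - w‖ := by
  refine (pi_norm_le_iff_of_nonneg (norm_nonneg _)).2 fun t => ?_
  calc ‖relu v t - relu w t‖ = |max (v t) 0 - max (w t) 0| := rfl
    _ ≤ |v t - w t| := abs_max_sub_max_le_abs _ _ _
    _ ≤ ‖v - w‖ := norm_le_pi_norm (v - w) t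

theorem padChain_self (n : ℕ → ℕ) (a : ℕ) (v : Fin (n a) → ℝ) : padChain n a a v = v := by
  funext t
  rw [padChain, dif_pos ⟨t.isLt, fun j hj hj' => absurd (hj.trans_lt hj') (lt_irrefl a)⟩]

theorem padChain_succ (n : ℕ → ℕ) {a m : ℕ} (ham : a ≤ m) (v : Fin (n a) → ℝ) :
    padChain n a (m + 1) v = truncPad (n (m + 1)) (padChain n a m v) := by
  funext t
  have hcond : (∀ j, a ≤ j → j < m + 1 → (t : ℕ) < n j) ↔
      (∀ j, a ≤ j → j < m → (t : ℕ) < n j) ∧ (t : ℕ) < n m := by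
    refine ⟨fun h => ⟨fun j hj hjm => h j hj (Nat.lt_succ_of_lt hjm), h m ham m.lt_succ_self⟩, ?_⟩
    exact fun ⟨h, hm⟩ j hj hj' => (Nat.lt_succ_iff_lt_or_eq.1 hj').elim (h j hj) (· ▸ hm)
  simp only [padChain, truncPad, hcond]
  by_cases h1 : (t : ℕ) < n m <;> by_cases h2 : (t : ℕ) < n a <;> simp [h1, h2]

theorem padChain_sub (n : ℕ → ℕ) (a b : ℕ) (v w : Fin (n a) → ℝ) :
    padChain n a b (v - w) = padChain n a b v - padChain n a b w := by
  funext t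
  simp only [padChain, Pi.sub_apply]
  split_ifs <;> simp

theorem norm_padChain_le (n : ℕ → ℕ) (a b : ℕ) (v : Fin (n a) → ℝ) :
    ‖padChain n a b v‖ ≤ ‖v‖ := by
  refine (pi_norm_le_iff_of_nonneg (norm_nonneg _)).2 fun t => ?_
  simp only [padChain]
  split_ifs with h
  · exact norm_le_pi_norm v _
  · simp

theorem one_le_norm_relu_padChain_one {n : ℕ → ℕ} (hn : ∀ j, 0 < n j) (a b : ℕ) :
    1 ≤ ‖relu (padChain n a b 1)‖ := by
  have h0 : relu (padChain n a b 1) ⟨0, hn b⟩ = 1 := by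
    simp [relu, padChain, hn]
  simpa [h0] using norm_le_pi_norm (relu (padChain n a b 1)) ⟨0, hn b⟩

theorem eq_prod_smul_relu_padChain {n : ℕ → ℕ} {a : ℕ → ℝ} (ha : ∀ j, 0 ≤ a j) {b K : ℕ}
    {g : (j : ℕ) → Fin (n j) → ℝ} {y : Fin (n b) → ℝ} (hb : g b = relu y)
    (hstep : ∀ j, b ≤ j → j < K → g (j + 1) = relu (a j • truncPad (n (j + 1)) (g j))) :
    ∀ m, b ≤ m → m ≤ K → g m = (∏ j ∈ Ico b m, a j) • relu (padChain n b m y) := by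
  intro m hbm
  induction m, hbm using Nat.le_induction with
  | base => simp [hb, padChain_self]
  | succ m hbm ih =>
    intro hmK
    have hprod : 0 ≤ ∏ j ∈ Ico b m, a j := prod_nonneg fun j _ => ha j
    rw [hstep m hbm hmK, ih (Nat.le_of_succ_le hmK), truncPad_smul, truncPad_relu,
      ← padChain_succ n hbm, relu_smul_of_nonneg (ha m), relu_smul_of_nonneg hprod, relu_relu,
      smul_smul, prod_Ico_succ_top hbm, mul_comm]

section ScaledReluPadChain

variable {n : ℕ → ℕ} {a b : ℕ} {c : ℝ}

theorem norm_smul_relu_padChain_sub_le (hc : 0 ≤ c) (y y' : Fin (n a) → ℝ) :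
    ‖c • relu (padChain n a b y) - c • relu (padChain n a b y')‖ ≤ c * ‖y - y'‖ := by
  rw [← smul_sub, norm_smul, Real.norm_of_nonneg hc]
  gcongr
  calc _ ≤ ‖padChain n a b y - padChain n a b y'‖ := norm_relu_sub_relu_le _ _
    _ = ‖padChain n a b (y - y')‖ := by rw [padChain_sub]
    _ ≤ ‖y - y'‖ := norm_padChain_le _ _ _ _

theorem le_of_smul_relu_padChain_sub_le (hn : ∀ j, 0 < n j) (hc : 0 ≤ c) {L : ℝ}
    (hL : ∀ y y' : Fin (n a) → ℝ,
      ‖c • relu (padChain n a b y) - c • relu (padChain n a b y')‖ ≤ L * ‖y - y'‖) :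
    c ≤ L := by
  have : Nonempty (Fin (n a)) := ⟨⟨0, hn a⟩⟩
  have hzero : relu (padChain n a b 0) = 0 := by
    funext t
    simp [relu, padChain]
  calc c ≤ c * ‖relu (padChain n a b 1)‖ :=
        le_mul_of_one_le_right hc (one_le_norm_relu_padChain_one hn a b)
    _ = ‖c • relu (padChain n a b 1) - c • relu (padChain n a b 0)‖ := by
        rw [hzero, smul_zero, sub_zero, norm_smul, Real.norm_of_nonneg hc]
    _ ≤ L := by simpa using hL 1 0

end ScaledReluPadChain

/-- In a ReLU feedforward family (layers `0,…,K-1`, widths `n`, weight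
bounds `s`), for a layer index `i` with `i + 1 < K` and any `a_j ∈ [0, s_j]` for `j > i`,
there exist tail weights `Wt_j` with `‖Wt_j‖ ≤ s_j` such that for every choice of the
remaining weights the network output satisfies
`h_K = (∏_{i<j<K} a_j) • ReLU((W_i h_i)^{(n_{i+2},…,n_K)})`, and the Lipschitz constant of
`h_K` with respect to the pre-activation `y_i = W_i h_i` equals exactly `∏_{i<j<K} a_j`. -/
theorem relu_tail_construction (K : ℕ) (n : ℕ → ℕ) (hn : ∀ j, 0 < n j)
    (s a : ℕ → ℝ) (i : ℕ) (hi : i + 1 < K)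
    (ha : ∀ j, a j ∈ Set.Icc 0 (s j)) :
    ∃ Wt : (j : ℕ) → Matrix (Fin (n (j + 1))) (Fin (n j)) ℝ,
      (∀ j, i < j → j < K → infNorm (Wt j) ≤ s j) ∧
      ∀ W : (j : ℕ) → Matrix (Fin (n (j + 1))) (Fin (n j)) ℝ,
        (∀ j, i < j → j < K → W j = Wt j) →
        (∀ h : (j : ℕ) → (Fin (n 0) → ℝ) → (Fin (n j) → ℝ),
          (∀ x, h 0 x = x) →
          (∀ j x, h (j + 1) x = relu ((W j).mulVec (h j x))) →
          ∀ x, h K x = (∏ j ∈ Finset.Ioo i K, a j) •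
            relu (padChain n (i + 1) K ((W i).mulVec (h i x)))) ∧
        (∀ t : (j : ℕ) → (Fin (n (i + 1)) → ℝ) → (Fin (n j) → ℝ),
          (∀ y, t (i + 1) y = relu y) →
          (∀ j, i + 1 ≤ j → ∀ y, t (j + 1) y = relu ((W j).mulVec (t j y))) →
          (∀ y y', ‖t K y - t K y'‖ ≤ (∏ j ∈ Finset.Ioo i K, a j) * ‖y - y'‖) ∧
          (∀ L : ℝ, (∀ y y', ‖t K y - t K y'‖ ≤ L * ‖y - y'‖) →
            (∏ j ∈ Finset.Ioo i K, a j) ≤ L)) := by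
  have ha0 : ∀ j, 0 ≤ a j := fun j => (ha j).1
  have hprod : 0 ≤ ∏ j ∈ Ioo i K, a j := prod_nonneg fun j _ => ha0 j
  refine ⟨fun j => a j • rectId (n (j + 1)) (n j),
    fun j _ _ => (infNorm_smul_rectId_le (ha0 j)).trans (ha j).2, fun W hW => ?_⟩
  have hlayer : ∀ j, i + 1 ≤ j → j < K → ∀ v, (W j).mulVec v = a j • truncPad (n (j + 1)) v :=
    fun j hj hjK v => by rw [hW j hj hjK, Matrix.smul_mulVec, rectId_mulVec]
  have htail : ∀ {g : (j : ℕ) → Fin (n j) → ℝ} {y : Fin (n (i + 1)) → ℝ}, g (i + 1) = relu y →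
      (∀ j, i + 1 ≤ j → j < K → g (j + 1) = relu ((W j).mulVec (g j))) →
      g K = (∏ j ∈ Ioo i K, a j) • relu (padChain n (i + 1) K y) := fun hb hstep => by
    rw [← Ico_add_one_left_eq_Ioo]
    refine eq_prod_smul_relu_padChain ha0 hb (fun j hj hjK => ?_) K hi.le le_rfl
    rw [hstep j hj hjK, hlayer j hj hjK]
  refine ⟨fun h _ hrec x => htail (g := fun j => h j x) (hrec i x) fun j _ _ => hrec j x,
    fun t ht hts => ?_⟩
  have htK : ∀ y, t K y = (∏ j ∈ Ioo i K, a j) • relu (padChain n (i + 1) K y) :=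
    fun y => htail (g := fun j => t j y) (ht y) fun j hj _ => hts j hj y
  simp only [htK]
  exact ⟨norm_smul_relu_padChain_sub_le hprod,
    fun L hL => le_of_smul_relu_padChain_sub_le hn hprod hL⟩
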